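/- In the iterated-estimate setting, define the estimated degree deg-hat^S := max_{w ∈ 𝔽₂^J} ( vdeg-hat^S(w) + wt(w) ) ∈ ℤ ∪ {-∞}. Let d be an integer with d > |J|. If K satisfies J ⊆ K ⊆ {0,…,n-1} and deg-hat^K ≥ d, then for every index set I with K ⊆ I ⊆ {0,…,n-1}, deg-hat^I ≥ d. -/

import Mathlib

open Finset

section Core

variable {α : Type*}

/-- The monomial `x^u` over `𝔽₂`. -/
def monom [Fintype α] (u x : α → ZMod 2) : ZMod 2 :=
  ∏ i, if u i = 1 then x i else 1

/-- The ANF coefficient of the monomial `x^u` in `f`, via Möbius inversion. -/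
def anf [Fintype α] [DecidableEq α] (f : (α → ZMod 2) → ZMod 2) (u : α → ZMod 2) : ZMod 2 :=
  ∑ v ∈ Finset.univ.filter (fun v : α → ZMod 2 => ∀ i, v i = 1 → u i = 1), f v

/-- Hamming weight. -/
def wt [Fintype α] (u : α → ZMod 2) : ℕ :=
  (Finset.univ.filter (fun i => u i = 1)).card

/-- Algebraic degree, in `ℤ ∪ {-∞}`. -/
def deg [Fintype α] [DecidableEq α] (f : (α → ZMod 2) → ZMod 2) : WithBot ℤ :=
  (Finset.univ.filter (fun u : α → ZMod 2 => anf f u = 1)).sup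
    (fun u => ((wt u : ℤ) : WithBot ℤ))

/-- Combine an assignment on `I` with one on `Iᶜ` to a full assignment. -/
def combine [Fintype α] [DecidableEq α] (I : Finset α) (w : ↥I → ZMod 2)
    (y : ↥Iᶜ → ZMod 2) : α → ZMod 2 :=
  fun i => if h : i ∈ I then w ⟨i, h⟩ else y ⟨i, Finset.mem_compl.mpr h⟩

/-- The coefficient function `g_{f,w}` of `x_I^w` in `f`, a Boolean function of `x_{Iᶜ}`. -/
def coeffFun [Fintype α] [DecidableEq α] (f : (α → ZMod 2) → ZMod 2) (I : Finset α)
    (w : ↥I → ZMod 2) : (↥Iᶜ → ZMod 2) → ZMod 2 :=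
  fun y => ∑ t : ↥Iᶜ → ZMod 2, anf f (combine I w t) * monom t y

/-- The vector degree of `f` w.r.t. the index set `I`. -/
def vdeg [Fintype α] [DecidableEq α] (f : (α → ZMod 2) → ZMod 2) (I : Finset α)
    (w : ↥I → ZMod 2) : WithBot ℤ :=
  deg (coeffFun f I w)

/-- `f` with the variables outside `S` set to `0`. -/
def restrict0 [Fintype α] [DecidableEq α] (f : (α → ZMod 2) → ZMod 2) (S : Finset α) :
    (α → ZMod 2) → ZMod 2 :=
  fun x => f (fun i => if i ∈ S then x i else 0)

/-- Combine an assignment on `I₁` with one on `I₂ \ I₁` to an assignment on `I₂`. -/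
def joinFn [DecidableEq α] {I₁ I₂ : Finset α} (w : ↥I₁ → ZMod 2)
    (w' : ↥(I₂ \ I₁) → ZMod 2) : ↥I₂ → ZMod 2 :=
  fun j => if h : (j : α) ∈ I₁ then w ⟨(j : α), h⟩
           else w' ⟨(j : α), Finset.mem_sdiff.mpr ⟨j.2, h⟩⟩

end Core

/-- Coordinatewise OR of the family `W i`, over indices `i` with `u i = 1`. -/
def orFam {n : ℕ} {β : Type*} (u : Fin n → ZMod 2) (W : Fin n → β → ZMod 2) :
    β → ZMod 2 :=
  fun j => if ∃ i, u i = 1 ∧ W i j = 1 then 1 else 0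

/-- The vector numeric mapping `VDEG_d(f, V)`. -/
def VDEG {n : ℕ} {δ : Type*} [Fintype δ] [DecidableEq δ]
    (f : (Fin n → ZMod 2) → ZMod 2) (V : Fin n → (δ → ZMod 2) → WithBot ℤ)
    (w : δ → ZMod 2) : WithBot ℤ :=
  (Finset.univ.filter (fun p : (Fin n → ZMod 2) × (Fin n → δ → ZMod 2) =>
      anf f p.1 = 1 ∧ (∀ i, p.1 i = 0 → p.2 i = 0) ∧ w = orFam p.1 p.2)).sup
    (fun p => ∑ i ∈ Finset.univ.filter (fun i => p.1 i = 1), V i (p.2 i))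

/-- Monomial transition `π_u(x) → π_v(g(x))`. -/
def MonTrans {a b : ℕ} (g : (Fin a → ZMod 2) → (Fin b → ZMod 2))
    (u : Fin a → ZMod 2) (v : Fin b → ZMod 2) : Prop :=
  anf (fun x => monom v (g x)) u = 1

/-- Monomial trails from level `a` to level `b`, with fixed endpoints `u`, `v`
(trails are normalized to be `0` outside the levels `a, …, b`). -/
def Trails (n : ℕ → ℕ) (f : ∀ i, (Fin (n i) → ZMod 2) → (Fin (n (i + 1)) → ZMod 2))
    (a b : ℕ) (u : Fin (n a) → ZMod 2) (v : Fin (n b) → ZMod 2) :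
    Set (∀ i, Fin (n i) → ZMod 2) :=
  {t | t a = u ∧ t b = v ∧ (∀ i, a ≤ i → i < b → MonTrans (f i) (t i) (t (i + 1))) ∧
       (∀ i, i < a → t i = fun _ => 0) ∧ (∀ i, b < i → t i = fun _ => 0)}

/-- The iterated composition `f_{b-1} ∘ ⋯ ∘ f_a` (meaningful for `a ≤ b`). -/
def iterComp (n : ℕ → ℕ) (f : ∀ i, (Fin (n i) → ZMod 2) → (Fin (n (i + 1)) → ZMod 2))
    (a : ℕ) : (b : ℕ) → (Fin (n a) → ZMod 2) → (Fin (n b) → ZMod 2)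
  | 0 => fun x j => if h : a = 0 then x (Fin.cast (show n 0 = n a by rw [h]) j) else 0
  | b + 1 =>
      if h : a = b + 1 then fun x j => x (Fin.cast (show n (b + 1) = n a by rw [h]) j)
      else fun x => f b (iterComp n f a b x)

section Iterated

/-- Embed an index set `J ⊆ {0,…,n-1}` into the joint index set of size `n' 0 = n + m`. -/
def liftJ {n m N0 : ℕ} (h0 : N0 = n + m) (J : Finset (Fin n)) : Finset (Fin N0) :=
  J.image (fun (j : Fin n) => (⟨j.val, by have := j.isLt; omega⟩ : Fin N0))

/-- Set the `x`-variables outside `S` to zero in a joint assignment. -/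
def mask0 {n m N0 : ℕ} (h0 : N0 = n + m) (S : Finset (Fin n)) (z : Fin N0 → ZMod 2) :
    Fin N0 → ZMod 2 :=
  fun i => if h : (i : ℕ) < n then (if (⟨(i : ℕ), h⟩ : Fin n) ∈ S then z i else 0) else z i

/-- The iterated estimated vector degrees `V_t^S`. -/
def Vt {n m : ℕ} (n' : ℕ → ℕ) (h0 : n' 0 = n + m)
    (f : ∀ t, (Fin (n' t) → ZMod 2) → (Fin (n' (t + 1)) → ZMod 2))
    (J S : Finset (Fin n)) :
    (t : ℕ) → Fin (n' (t + 1)) → (↥(liftJ h0 J) → ZMod 2) → WithBot ℤ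
  | 0 => fun i => vdeg (fun z => f 0 (mask0 h0 S z) i) (liftJ h0 J)
  | t + 1 => fun i => VDEG (fun y => f (t + 1) y i) (Vt n' h0 f J S t)

/-- The estimated vector degree `vdeg-hat^S` (here `r = s + 2`). -/
def vdegHat {n m : ℕ} (n' : ℕ → ℕ) (h0 : n' 0 = n + m)
    (f : ∀ t, (Fin (n' t) → ZMod 2) → (Fin (n' (t + 1)) → ZMod 2))
    (J : Finset (Fin n)) (s : ℕ) (S : Finset (Fin n)) :
    (↥(liftJ h0 J) → ZMod 2) → WithBot ℤ :=
  VDEG (fun y => monom (fun _ => 1) (f (s + 1) y)) (Vt n' h0 f J S s)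

/-- The estimated degree `deg-hat^S`. -/
noncomputable def degHat {n m : ℕ} (n' : ℕ → ℕ) (h0 : n' 0 = n + m)
    (f : ∀ t, (Fin (n' t) → ZMod 2) → (Fin (n' (t + 1)) → ZMod 2))
    (J : Finset (Fin n)) (s : ℕ) (S : Finset (Fin n)) : WithBot ℤ :=
  Finset.univ.sup (fun w : ↥(liftJ h0 J) → ZMod 2 =>
    vdegHat n' h0 f J s S w + ((wt w : ℤ) : WithBot ℤ))

end Iterated

/-!
Pruning is monotonicity of the estimate in `S`. Setting the variables `x_{Sᶜ}` to zero
deletes exactly the ANF monomials of `f_0` that contain one of them, so enlarging `S` only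
adds monomials, and the vector degrees `V₀^S` can only grow. `VDEG` is monotone in its
array argument, so this propagates through every round to `vdeg-hat^S` and `deg-hat^S`.
-/

section Anf

lemma ZMod.two_eq_of_eq_one_iff {a b : ZMod 2} (h : a = 1 ↔ b = 1) : a = b := by
  revert a b; decide

lemma ZMod.two_eq_zero_of_ne_one {a : ZMod 2} (h : a ≠ 1) : a = 0 := by
  revert a; decide

variable {α : Type*} [Fintype α]

lemma monom_eq_ite (t x : α → ZMod 2) :
    monom t x = if ∀ i, t i = 1 → x i = 1 then 1 else 0 := by
  unfold monom
  split_ifs with h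
  · exact Finset.prod_eq_one fun i _ => by split_ifs with hi <;> simp [h i, hi]
  · push Not at h
    obtain ⟨i, hti, hxi⟩ := h
    exact Finset.prod_eq_zero (mem_univ i) (by rw [if_pos hti, ZMod.two_eq_zero_of_ne_one hxi])

variable [DecidableEq α]

def downset (u : α → ZMod 2) : Finset (α → ZMod 2) :=
  univ.filter fun v => ∀ i, v i = 1 → u i = 1

lemma anf_eq_sum_downset (f : (α → ZMod 2) → ZMod 2) (u : α → ZMod 2) :
    anf f u = ∑ v ∈ downset u, f v := rfl

lemma mem_downset {u v : α → ZMod 2} : v ∈ downset u ↔ ∀ i, v i = 1 → u i = 1 := by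
  simp [downset]

/-- Flipping coordinate `i₀` pairs the points of `downset u` off, so in characteristic `2`
a flip-invariant summand sums to zero. -/
lemma sum_downset_eq_zero_of_flip_invariant (h : (α → ZMod 2) → ZMod 2) {u : α → ZMod 2}
    {i₀ : α} (hu : u i₀ = 1) (hh : ∀ v, h (v + Pi.single i₀ 1) = h v) :
    ∑ v ∈ downset u, h v = 0 := by
  have flip_apply (v : α → ZMod 2) (i : α) (hi : i ≠ i₀) :
      (v + Pi.single i₀ 1 : α → ZMod 2) i = v i := by
    simp [hi]
  refine Finset.sum_involution (fun v _ => v + Pi.single i₀ 1) (fun v _ => ?_) (fun v _ _ => ?_)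
    (fun v hv => ?_) (fun v _ => ?_)
  · rw [hh, CharTwo.add_self_eq_zero]
  · simp
  · rw [mem_downset] at hv ⊢
    intro i hi
    by_cases hi₀ : i = i₀
    · exact hi₀ ▸ hu
    · exact hv i (flip_apply v i hi₀ ▸ hi)
  · funext i
    simp [add_assoc, CharTwo.add_self_eq_zero]

/-- Möbius inversion on the Boolean lattice, for a single monomial. -/
lemma sum_downset_monom (t u : α → ZMod 2) :
    ∑ v ∈ downset u, monom t v = if t = u then 1 else 0 := by
  split_ifs with htu
  · subst htu
    rw [Finset.sum_eq_single_of_mem t (mem_downset.mpr fun _ h => h), monom_eq_ite,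
      if_pos fun _ h => h]
    intro v hv hvt
    rw [monom_eq_ite, if_neg]
    exact fun htv => hvt (funext fun i =>
      ZMod.two_eq_of_eq_one_iff ⟨mem_downset.mp hv i, htv i⟩)
  by_cases htu_le : ∀ i, t i = 1 → u i = 1
  · obtain ⟨i₀, hu₀, ht₀⟩ : ∃ i₀, u i₀ = 1 ∧ t i₀ ≠ 1 := by
      by_contra! h
      exact htu (funext fun i => ZMod.two_eq_of_eq_one_iff ⟨htu_le i, h i⟩)
    refine sum_downset_eq_zero_of_flip_invariant _ hu₀ fun v => ?_
    refine Finset.prod_congr rfl fun i _ => ?_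
    by_cases hi : i = i₀
    · subst hi; simp [ht₀]
    · simp [hi]
  · push Not at htu_le
    obtain ⟨i₀, ht₀, hu₀⟩ := htu_le
    refine Finset.sum_eq_zero fun v hv => ?_
    rw [monom_eq_ite, if_neg fun htv => hu₀ (mem_downset.mp hv i₀ (htv i₀ ht₀))]

lemma anf_sum_monom (a : (α → ZMod 2) → ZMod 2) (u : α → ZMod 2) :
    anf (fun y => ∑ t, a t * monom t y) u = a u := by
  rw [anf_eq_sum_downset, Finset.sum_comm]
  simp [← Finset.mul_sum, sum_downset_monom]

lemma anf_coeffFun (f : (α → ZMod 2) → ZMod 2) (I : Finset α) (w : ↥I → ZMod 2)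
    (t : ↥Iᶜ → ZMod 2) : anf (coeffFun f I w) t = anf f (combine I w t) :=
  anf_sum_monom _ t

lemma deg_mono_of_anf {f g : (α → ZMod 2) → ZMod 2}
    (h : ∀ u, anf f u = 1 → anf g u = 1) : deg f ≤ deg g :=
  Finset.sup_mono fun u hu => by simp_all

lemma vdeg_mono_of_anf {f g : (α → ZMod 2) → ZMod 2} (h : ∀ u, anf f u = 1 → anf g u = 1)
    (I : Finset α) (w : ↥I → ZMod 2) : vdeg f I w ≤ vdeg g I w :=
  deg_mono_of_anf fun t => by simpa only [anf_coeffFun] using h _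

lemma anf_comp_mask (P : α → Prop) [DecidablePred P] (g : (α → ZMod 2) → ZMod 2)
    (u : α → ZMod 2) :
    anf (fun x => g fun i => if P i then x i else 0) u
      = if ∀ i, u i = 1 → P i then anf g u else 0 := by
  rw [anf_eq_sum_downset]
  split_ifs with hu
  · refine Finset.sum_congr rfl fun v hv => congrArg g (funext fun i => ?_)
    split_ifs with hP
    · rfl
    · exact (ZMod.two_eq_zero_of_ne_one fun hv1 => hP (hu i (mem_downset.mp hv i hv1))).symm
  · push Not at hu
    obtain ⟨i₀, hu₀, hP₀⟩ := hu
    refine sum_downset_eq_zero_of_flip_invariant _ hu₀ fun v => congrArg g (funext fun i => ?_)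
    split_ifs with hP
    · have : i ≠ i₀ := by rintro rfl; exact hP₀ hP
      simp [this]
    · rfl

lemma vdeg_comp_mask_mono {P Q : α → Prop} [DecidablePred P] [DecidablePred Q]
    (hPQ : ∀ i, P i → Q i) (g : (α → ZMod 2) → ZMod 2) (I : Finset α) (w : ↥I → ZMod 2) :
    vdeg (fun x => g fun i => if P i then x i else 0) I w
      ≤ vdeg (fun x => g fun i => if Q i then x i else 0) I w := by
  refine vdeg_mono_of_anf (fun u hu => ?_) I w
  rw [anf_comp_mask] at hu ⊢
  split_ifs at hu with hsupp
  · rwa [if_pos fun i hi => hPQ i (hsupp i hi)]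
  · exact absurd hu zero_ne_one

end Anf

lemma VDEG_mono {n : ℕ} {δ : Type*} [Fintype δ] [DecidableEq δ]
    (f : (Fin n → ZMod 2) → ZMod 2) {V V' : Fin n → (δ → ZMod 2) → WithBot ℤ}
    (h : V ≤ V') : VDEG f V ≤ VDEG f V' := fun _ =>
  Finset.sup_mono_fun fun _ _ => Finset.sum_le_sum fun i _ => h i _

section Iterated

variable {n m : ℕ}

/-- The variables `mask0 h0 S` keeps: the key variables (indices `≥ n`) and the `x`-variables
in `S`. -/
def maskKeeps {N0 : ℕ} (S : Finset (Fin n)) (j : Fin N0) : Prop :=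
  ∀ h : (j : ℕ) < n, (⟨j, h⟩ : Fin n) ∈ S

instance {N0 : ℕ} (S : Finset (Fin n)) : DecidablePred (maskKeeps (N0 := N0) S) :=
  fun _ => by unfold maskKeeps; infer_instance

lemma mask0_eq_ite {N0 : ℕ} (h0 : N0 = n + m) (S : Finset (Fin n)) (z : Fin N0 → ZMod 2) :
    mask0 h0 S z = fun j => if maskKeeps S j then z j else 0 := by
  funext j
  by_cases hj : (j : ℕ) < n <;> simp [mask0, maskKeeps, hj]

lemma Vt_mono (n' : ℕ → ℕ) (h0 : n' 0 = n + m)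
    (f : ∀ t, (Fin (n' t) → ZMod 2) → (Fin (n' (t + 1)) → ZMod 2))
    (J : Finset (Fin n)) {K I : Finset (Fin n)} (hKI : K ⊆ I) (t : ℕ) :
    Vt n' h0 f J K t ≤ Vt n' h0 f J I t := by
  induction t with
  | zero =>
    intro i w
    show vdeg (fun z => f 0 (mask0 h0 K z) i) _ w ≤ vdeg (fun z => f 0 (mask0 h0 I z) i) _ w
    simp only [mask0_eq_ite]
    exact vdeg_comp_mask_mono (fun j hj hn => hKI (hj hn)) (fun y => f 0 y i) _ w
  | succ t ih => exact fun i => VDEG_mono _ ih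

lemma degHat_mono (n' : ℕ → ℕ) (h0 : n' 0 = n + m)
    (f : ∀ t, (Fin (n' t) → ZMod 2) → (Fin (n' (t + 1)) → ZMod 2))
    (J : Finset (Fin n)) (s : ℕ) {K I : Finset (Fin n)} (hKI : K ⊆ I) :
    degHat n' h0 f J s K ≤ degHat n' h0 f J s I :=
  Finset.sup_mono_fun fun w _ =>
    add_le_add_left (VDEG_mono _ (Vt_mono n' h0 f J hKI s) w) _

end Iterated

theorem degHat_prune_general {n m : ℕ} (n' : ℕ → ℕ) (h0 : n' 0 = n + m)
    (s : ℕ)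
    (f : ∀ t, (Fin (n' t) → ZMod 2) → (Fin (n' (t + 1)) → ZMod 2))
    (J : Finset (Fin n)) (d : ℤ)
    (K : Finset (Fin n))
    (hK : (d : WithBot ℤ) ≤ degHat n' h0 f J s K) :
    ∀ I : Finset (Fin n), K ⊆ I → (d : WithBot ℤ) ≤ degHat n' h0 f J s I :=
  fun _ hKI => hK.trans (degHat_mono n' h0 f J s hKI)

/-- Pruning: if the estimated degree w.r.t. `K ⊇ J` already reaches the
threshold `d > |J|`, then so does the estimated degree w.r.t. any `I ⊇ K`
(here `r = s + 2`). -/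
theorem degHat_prune {n m : ℕ} (n' : ℕ → ℕ) (h0 : n' 0 = n + m)
    (s : ℕ) (hr : n' (s + 2) = 1)
    (f : ∀ t, (Fin (n' t) → ZMod 2) → (Fin (n' (t + 1)) → ZMod 2))
    (J : Finset (Fin n)) (d : ℤ) (hd : (J.card : ℤ) < d)
    (K : Finset (Fin n)) (hJK : J ⊆ K)
    (hK : (d : WithBot ℤ) ≤ degHat n' h0 f J s K) :
    ∀ I : Finset (Fin n), K ⊆ I → (d : WithBot ℤ) ≤ degHat n' h0 f J s I :=
  degHat_prune_general n' h0 s f J d K hK
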